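/- arXiv:1412.4463 — 3 statements merged into one kernel-verified Lean document; each statement's English description precedes it below -/
import Mathlib

section
/- For any two data paths w and w′ over Σ and 𝔇, there exists an REM e with w ∈ L(e) and w′ ∉ L(e) if and only if w′ is not automorphic to w. -/
/-- A data path `d₀ a₀ d₁ a₁ … a_{m−1} d_m`: a first data value followed by a
list of (letter, data value) pairs. -/
structure DataPath (A D : Type) where
  head : D
  tail : List (A × D)

namespace DataPath

/-- The last data value of a data path. -/
def lastVal {A D : Type} (w : DataPath A D) : D :=
  ((w.tail.getLast?).map Prod.snd).getD w.head

/-- Concatenation of data paths (meaningful when `w₁.lastVal = w₂.head`). -/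
def comp {A D : Type} (w₁ w₂ : DataPath A D) : DataPath A D :=
  ⟨w₁.head, w₁.tail ++ w₂.tail⟩

/-- Apply a map on data values to all data values of a data path. -/
def dmap {A D : Type} (π : D → D) (w : DataPath A D) : DataPath A D :=
  ⟨π w.head, w.tail.map (fun p => (p.1, π p.2))⟩

end DataPath

/-- Conditions over `k` registers. -/
inductive Cond (k : ℕ) where
  | top : Cond k
  | eq : Fin k → Cond k
  | ne : Fin k → Cond k
  | conj : Cond k → Cond k → Cond k
  | disj : Cond k → Cond k → Cond k
  | neg : Cond k → Cond k

/-- Satisfaction of a condition at data value `d` under assignment `τ`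
(`none` is the empty register `⊥`, unequal to every data value). -/
def CondSat {D : Type} {k : ℕ} (d : D) (τ : Fin k → Option D) : Cond k → Prop
  | .top => True
  | .eq i => τ i = some d
  | .ne i => τ i ≠ some d
  | .conj c₁ c₂ => CondSat d τ c₁ ∧ CondSat d τ c₂
  | .disj c₁ c₂ => CondSat d τ c₁ ∨ CondSat d τ c₂
  | .neg c => ¬ CondSat d τ c

/-- Regular expressions with memory over alphabet `A` with `k` registers. -/
inductive REM (A : Type) (k : ℕ) where
  | eps : REM A k
  | letter : A → REM A k
  | plus : REM A k → REM A k → REM A k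
  | concat : REM A k → REM A k → REM A k
  | iter : REM A k → REM A k
  | test : REM A k → Cond k → REM A k
  | bind : List (Fin k) → REM A k → REM A k

/-- Store `d` in each of the registers in `rs`. -/
def updReg {D : Type} {k : ℕ} (σ : Fin k → Option D) (rs : List (Fin k)) (d : D) :
    Fin k → Option D :=
  fun i => if i ∈ rs then some d else σ i

/-- The satisfaction relation `(e, w, σ) ⊢ σ'` of REMs on data paths. -/
inductive REMSat {A D : Type} {k : ℕ} :
    REM A k → DataPath A D → (Fin k → Option D) → (Fin k → Option D) → Prop
  | eps (d : D) (σ : Fin k → Option D) : REMSat .eps ⟨d, []⟩ σ σ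
  | letter (a : A) (d₁ d₂ : D) (σ : Fin k → Option D) :
      REMSat (.letter a) ⟨d₁, [(a, d₂)]⟩ σ σ
  | plusL {e₁ e₂ w σ σ'} : REMSat e₁ w σ σ' → REMSat (.plus e₁ e₂) w σ σ'
  | plusR {e₁ e₂ w σ σ'} : REMSat e₂ w σ σ' → REMSat (.plus e₁ e₂) w σ σ'
  | concat {e₁ e₂ w₁ w₂ σ σ₁ σ'} : w₁.lastVal = w₂.head →
      REMSat e₁ w₁ σ σ₁ → REMSat e₂ w₂ σ₁ σ' →
      REMSat (.concat e₁ e₂) (w₁.comp w₂) σ σ'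
  | iterBase {e w σ σ'} : REMSat e w σ σ' → REMSat (.iter e) w σ σ'
  | iterStep {e w₁ w₂ σ σ₁ σ'} : w₁.lastVal = w₂.head →
      REMSat e w₁ σ σ₁ → REMSat (.iter e) w₂ σ₁ σ' →
      REMSat (.iter e) (w₁.comp w₂) σ σ'
  | test {e c w σ σ'} : REMSat e w σ σ' → CondSat w.lastVal σ' c →
      REMSat (.test e c) w σ σ'
  | bind {rs e w σ σ'} : REMSat e w (updReg σ rs w.head) σ' →
      REMSat (.bind rs e) w σ σ'

/-- The language of a `k`-REM: data paths accepted starting from the empty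
assignment `⊥^k`. -/
def REMLang {A D : Type} {k : ℕ} (e : REM A k) : Set (DataPath A D) :=
  {w | ∃ σ' : Fin k → Option D, REMSat e w (fun _ => none) σ'}

/-- Regular expressions with equality over alphabet `A`. -/
inductive REE (A : Type) where
  | eps : REE A
  | letter : A → REE A
  | plus : REE A → REE A → REE A
  | concat : REE A → REE A → REE A
  | iter : REE A → REE A
  | eqTest : REE A → REE A
  | neTest : REE A → REE A

/-- The language of data paths of an REE. -/
inductive REELang {A D : Type} : REE A → DataPath A D → Prop
  | eps (d : D) : REELang .eps ⟨d, []⟩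
  | letter (a : A) (d₁ d₂ : D) : REELang (.letter a) ⟨d₁, [(a, d₂)]⟩
  | plusL {e₁ e₂ w} : REELang e₁ w → REELang (.plus e₁ e₂) w
  | plusR {e₁ e₂ w} : REELang e₂ w → REELang (.plus e₁ e₂) w
  | concat {e₁ e₂ w₁ w₂} : w₁.lastVal = w₂.head →
      REELang e₁ w₁ → REELang e₂ w₂ → REELang (.concat e₁ e₂) (w₁.comp w₂)
  | iterBase {e w} : REELang e w → REELang (.iter e) w
  | iterStep {e w₁ w₂} : w₁.lastVal = w₂.head →
      REELang e w₁ → REELang (.iter e) w₂ → REELang (.iter e) (w₁.comp w₂)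
  | eqTest {e w} : REELang e w → w.head = w.lastVal → REELang (.eqTest e) w
  | neTest {e w} : REELang e w → w.head ≠ w.lastVal → REELang (.neTest e) w

/-- A data graph: labeled edges over node type `V` and data values on nodes. -/
structure DataGraph (V A D : Type) where
  E : Set (V × A × V)
  ρ : V → D

/-- `Connects G u w v`: the data path `w` connects node `u` to node `v` in `G`. -/
inductive Connects {V A D : Type} (G : DataGraph V A D) : V → DataPath A D → V → Prop
  | nil (u : V) : Connects G u ⟨G.ρ u, []⟩ u
  | cons {u v x : V} {a : A} {t : List (A × D)} :
      (u, a, v) ∈ G.E → Connects G v ⟨G.ρ v, t⟩ x →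
      Connects G u ⟨G.ρ u, (a, G.ρ v) :: t⟩ x

/-- A block `↓r̄.a[c]` of a basic REM. -/
abbrev Block (A : Type) (k : ℕ) := List (Fin k) × A × Cond k

/-- The REM `↓r̄.a[c]` corresponding to a block. -/
def blockREM {A : Type} {k : ℕ} (b : Block A k) : REM A k :=
  .bind b.1 (.test (.letter b.2.1) b.2.2)

/-- The basic `k`-REM `↓r̄₁.a₁[c₁] · … · ↓r̄_m.a_m[c_m]` given by a list of blocks. -/
def basicREM {A : Type} {k : ℕ} : List (Block A k) → REM A k
  | [] => .eps
  | [b] => blockREM b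
  | b :: bs => .concat (blockREM b) (basicREM bs)

/-- `e` is a `k`-REM witness for `(u, v)` in `S`: some data path in its language
connects `u` to `v`, and every data path in its language only connects pairs in `S`. -/
def IsWitness {V A D : Type} {k : ℕ} (G : DataGraph V A D) (S : Set (V × V))
    (u v : V) (bs : List (Block A k)) : Prop :=
  (∃ w : DataPath A D, w ∈ REMLang (basicREM bs) ∧ Connects G u w v) ∧
  (∀ (u' v' : V) (w : DataPath A D),
      w ∈ REMLang (basicREM bs) → Connects G u' w v' → (u', v') ∈ S)

/-- A single transition of the `k`-assignment graph `T_G`, labeled by a block. -/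
def AssignStep {V A D : Type} {k : ℕ} (G : DataGraph V A D) (b : Block A k)
    (s s' : V × (Fin k → Option D)) : Prop :=
  (s.1, b.2.1, s'.1) ∈ G.E ∧ s'.2 = updReg s.2 b.1 (G.ρ s.1) ∧
    CondSat (G.ρ s'.1) s'.2 b.2.2

/-- A run in the `k`-assignment graph `T_G` along the blocks of a basic `k`-REM. -/
inductive AssignRun {V A D : Type} {k : ℕ} (G : DataGraph V A D) :
    List (Block A k) → V × (Fin k → Option D) → V × (Fin k → Option D) → Prop
  | nil (s : V × (Fin k → Option D)) : AssignRun G [] s s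
  | cons {b bs s s' s''} : AssignStep G b s s' → AssignRun G bs s' s'' →
      AssignRun G (b :: bs) s s''

/-- The binary relation `S_e` defined by an REE `e` on a data graph `G`. -/
def REEEval {V A D : Type} (G : DataGraph V A D) (e : REE A) : Set (V × V) :=
  {p : V × V | ∃ w : DataPath A D, REELang e w ∧ Connects G p.1 w p.2}

/-- Composition of binary relations. -/
def relComp {V : Type} (S₁ S₂ : Set (V × V)) : Set (V × V) :=
  {p : V × V | ∃ z : V, (p.1, z) ∈ S₁ ∧ (z, p.2) ∈ S₂}

/-- The `=`-restriction `S^=` of a relation. -/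
def eqRes {V A D : Type} (G : DataGraph V A D) (S : Set (V × V)) : Set (V × V) :=
  {p ∈ S | G.ρ p.1 = G.ρ p.2}

/-- The `≠`-restriction `S^≠` of a relation. -/
def neRes {V A D : Type} (G : DataGraph V A D) (S : Set (V × V)) : Set (V × V) :=
  {p ∈ S | G.ρ p.1 ≠ G.ρ p.2}

/-- Membership in the closure of a set `B` of binary relations under `+` (union)
and `∘` (composition). -/
inductive InClosure {V : Type} (B : Set (Set (V × V))) : Set (V × V) → Prop
  | base {S} : S ∈ B → InClosure B S
  | union {S₁ S₂} : InClosure B S₁ → InClosure B S₂ → InClosure B (S₁ ∪ S₂)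
  | comp {S₁ S₂} : InClosure B S₁ → InClosure B S₂ → InClosure B (relComp S₁ S₂)

/-- The base set `B₀ = {S_ε} ∪ {S_a | a ∈ Σ}`. -/
def B0 {V A D : Type} (G : DataGraph V A D) : Set (Set (V × V)) :=
  {S | S = REEEval G .eps ∨ ∃ a : A, S = REEEval G (.letter a)}

/-- The levels `L_i` of binary relations on a data graph. -/
def Level {V A D : Type} (G : DataGraph V A D) : ℕ → Set (Set (V × V))
  | 0 => {S | InClosure (B0 G) S}
  | i + 1 => {S | InClosure
      ((Level G i) ∪ (eqRes G '' (Level G i)) ∪ (neRes G '' (Level G i))) S}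

/-- The identity relation (neutral element for composition). -/
def relId (V : Type) : Set (V × V) := {p : V × V | p.1 = p.2}

/-- `LabelConnects G u l v`: some path from `u` to `v` in `G` has label word `l`. -/
inductive LabelConnects {V A D : Type} (G : DataGraph V A D) : V → List A → V → Prop
  | nil (u : V) : LabelConnects G u [] u
  | cons {u v x : V} {a : A} {l : List A} :
      (u, a, v) ∈ G.E → LabelConnects G v l x → LabelConnects G u (a :: l) x

/-- `q` is reachable from `p` in `G`. -/
def Reachable {V A D : Type} (G : DataGraph V A D) (p q : V) : Prop :=
  ∃ w : DataPath A D, Connects G p w q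

/-- Data graph homomorphism: preserves labeled edges and, on reachable pairs,
preserves and reflects equality of data values. -/
def IsDGHom {V A D : Type} (G : DataGraph V A D) (h : V → V) : Prop :=
  (∀ (p q : V) (a : A), (p, a, q) ∈ G.E → (h p, a, h q) ∈ G.E) ∧
  (∀ p q : V, Reachable G p q → (G.ρ p = G.ρ q ↔ G.ρ (h p) = G.ρ (h q)))

/-- A conjunctive regular data path query of arity `r`:
`Ans(z̄) := ⋀_i x_i →[e_i] y_i` where each `e_i` is an REM. -/
structure CRDPQ (A : Type) (r : ℕ) where
  nvars : ℕ
  m : ℕ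
  src : Fin m → Fin nvars
  tgt : Fin m → Fin nvars
  nreg : Fin m → ℕ
  expr : (i : Fin m) → REM A (nreg i)
  out : Fin r → Fin nvars

/-- The answer `Q(G)` of a CRDPQ on a data graph. -/
def CRDPQEval {V A D : Type} {r : ℕ} (G : DataGraph V A D) (Q : CRDPQ A r) :
    Set (Fin r → V) :=
  {t | ∃ μ : Fin Q.nvars → V,
        (∀ i : Fin Q.m, ∃ w : DataPath A D,
            w ∈ REMLang (Q.expr i) ∧ Connects G (μ (Q.src i)) w (μ (Q.tgt i))) ∧
        t = μ ∘ Q.out}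

/-- `S` is definable by a union of conjunctive regular data path queries. -/
def UCRDPQDefinable {V A D : Type} {r : ℕ} (G : DataGraph V A D)
    (S : Set (Fin r → V)) : Prop :=
  ∃ Qs : List (CRDPQ A r), S = {t | ∃ Q ∈ Qs, t ∈ CRDPQEval G Q}

set_option linter.unusedSectionVars false

section Inv
variable {A D : Type} {k : ℕ}

lemma condSat_map (π : D ≃ D) (d : D) (τ : Fin k → Option D) (c : Cond k) :
    CondSat (π d) (fun i => (τ i).map π) c ↔ CondSat d τ c := by
  induction c with
  | top => simp [CondSat]
  | eq i =>
      show (τ i).map π = some (π d) ↔ τ i = some d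
      simp only [Option.map_eq_some_iff]
      constructor
      · rintro ⟨a, ha, h⟩; rw [ha, π.injective h]
      · intro h; exact ⟨d, h, rfl⟩
  | ne i =>
      show (τ i).map π ≠ some (π d) ↔ τ i ≠ some d
      simp only [ne_eq, not_iff_not, Option.map_eq_some_iff]
      constructor
      · rintro ⟨a, ha, h⟩; rw [ha, π.injective h]
      · intro h; exact ⟨d, h, rfl⟩
  | conj c₁ c₂ ih₁ ih₂ => simp [CondSat, ih₁, ih₂]
  | disj c₁ c₂ ih₁ ih₂ => simp [CondSat, ih₁, ih₂]
  | neg c ih => simp [CondSat, ih]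

lemma dmap_head (π : D → D) (w : DataPath A D) : (w.dmap π).head = π w.head := rfl

lemma dmap_lastVal (π : D → D) (w : DataPath A D) :
    (w.dmap π).lastVal = π w.lastVal := by
  rcases w with ⟨h, t⟩
  induction t with
  | nil => rfl
  | cons x t ih =>
    rcases t with _ | ⟨y, t⟩
    · rfl
    · simpa [DataPath.dmap, DataPath.lastVal] using ih

lemma dmap_comp (π : D → D) (w₁ w₂ : DataPath A D) :
    (w₁.comp w₂).dmap π = (w₁.dmap π).comp (w₂.dmap π) := by
  simp [DataPath.comp, DataPath.dmap]

lemma updReg_map (π : D → D) (σ : Fin k → Option D) (rs : List (Fin k)) (d : D) :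
    (fun i => (updReg σ rs d i).map π) = updReg (fun i => (σ i).map π) rs (π d) := by
  funext i; by_cases h : i ∈ rs <;> simp [updReg, h]

lemma remSat_map (π : D ≃ D) {e : REM A k} {w : DataPath A D}
    {σ σ' : Fin k → Option D} (h : REMSat e w σ σ') :
    REMSat e (w.dmap π) (fun i => (σ i).map π) (fun i => (σ' i).map π) := by
  induction h with
  | eps d σ => exact REMSat.eps (π d) _
  | letter a d₁ d₂ σ => exact REMSat.letter a (π d₁) (π d₂) _
  | plusL _ ih => exact .plusL ih
  | plusR _ ih => exact .plusR ih
  | concat hmid _ _ ih₁ ih₂ =>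
    rw [dmap_comp]
    exact .concat (by rw [dmap_lastVal, dmap_head, hmid]) ih₁ ih₂
  | iterBase _ ih => exact .iterBase ih
  | iterStep hmid _ _ ih₁ ih₂ =>
    rw [dmap_comp]
    exact .iterStep (by rw [dmap_lastVal, dmap_head, hmid]) ih₁ ih₂
  | test _ hc ih =>
    exact .test ih (by rw [dmap_lastVal]; exact (condSat_map π _ _ _).2 hc)
  | bind h ih =>
    refine .bind ?_
    rw [dmap_head] at *
    rwa [updReg_map] at ih

lemma remLang_map (π : D ≃ D) {e : REM A k} {w : DataPath A D}
    (h : w ∈ (REMLang e : Set (DataPath A D))) : w.dmap π ∈ (REMLang e : Set (DataPath A D)) := by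
  obtain ⟨σ', hs⟩ := h
  refine ⟨fun i => (σ' i).map π, ?_⟩
  have := remSat_map π hs
  simpa using this

end Inv
section Construct
variable {A D : Type} {k : ℕ}

-- inversion lemmas
lemma eps_inv {w : DataPath A D} {σ σ' : Fin k → Option D}
    (h : REMSat (.eps : REM A k) w σ σ') : w.tail = [] ∧ σ' = σ := by
  cases h; exact ⟨rfl, rfl⟩

lemma letter_inv {a : A} {w : DataPath A D} {σ σ' : Fin k → Option D}
    (h : REMSat (.letter a : REM A k) w σ σ') :
    ∃ d₂, w.tail = [(a, d₂)] ∧ σ' = σ := by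
  cases h; exact ⟨_, rfl, rfl⟩

lemma test_inv {e : REM A k} {c : Cond k} {w : DataPath A D} {σ σ' : Fin k → Option D}
    (h : REMSat (.test e c) w σ σ') : REMSat e w σ σ' ∧ CondSat w.lastVal σ' c := by
  cases h; exact ⟨by assumption, by assumption⟩

lemma bind_inv {rs : List (Fin k)} {e : REM A k} {w : DataPath A D} {σ σ' : Fin k → Option D}
    (h : REMSat (.bind rs e) w σ σ') : REMSat e w (updReg σ rs w.head) σ' := by
  cases h; assumption

lemma concat_inv {e₁ e₂ : REM A k} {w : DataPath A D} {σ σ' : Fin k → Option D}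
    (h : REMSat (.concat e₁ e₂) w σ σ') :
    ∃ w₁ w₂ σ₁, w = w₁.comp w₂ ∧ w₁.lastVal = w₂.head ∧
      REMSat e₁ w₁ σ σ₁ ∧ REMSat e₂ w₂ σ₁ σ' := by
  cases h; exact ⟨_, _, _, rfl, by assumption, by assumption, by assumption⟩

lemma lastVal_single (d d₂ : D) (a : A) :
    (DataPath.lastVal ⟨d, [(a, d₂)]⟩ : D) = d₂ := rfl

lemma blockSat_iff {b : Block A k} {d : D} {t : List (A × D)} {σ σ' : Fin k → Option D} :
    REMSat (blockREM b) ⟨d, t⟩ σ σ' ↔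
      ∃ d₂, t = [(b.2.1, d₂)] ∧ σ' = updReg σ b.1 d ∧ CondSat d₂ σ' b.2.2 := by
  constructor
  · intro h
    have h1 := bind_inv h
    obtain ⟨h2, hc⟩ := test_inv h1
    obtain ⟨d₂, ht, hσ⟩ := letter_inv h2
    subst ht hσ
    exact ⟨d₂, rfl, rfl, hc⟩
  · rintro ⟨d₂, rfl, rfl, hc⟩
    exact .bind (.test (.letter _ _ _ _) hc)

/-- spec of runs of basic REMs made of blocks -/
def Runs : List (Block A k) → (Fin k → Option D) → D → List (A × D) →
    (Fin k → Option D) → Prop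
  | [], σ, _, t, σ' => t = [] ∧ σ' = σ
  | b :: bs, σ, d, t, σ' =>
      ∃ d₂ t', t = (b.2.1, d₂) :: t' ∧ CondSat d₂ (updReg σ b.1 d) b.2.2 ∧
        Runs bs (updReg σ b.1 d) d₂ t' σ'

lemma runs_iff (bs : List (Block A k)) (σ σ' : Fin k → Option D) (d : D)
    (t : List (A × D)) :
    REMSat (basicREM bs) ⟨d, t⟩ σ σ' ↔ Runs bs σ d t σ' := by
  induction bs generalizing σ d t with
  | nil =>
    constructor
    · intro h; exact eps_inv h
    · rintro ⟨rfl, rfl⟩; exact .eps d _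
  | cons b bs ih =>
    cases bs with
    | nil =>
      rw [show basicREM [b] = blockREM b from rfl, blockSat_iff]
      simp only [Runs]
      constructor
      · rintro ⟨d₂, rfl, rfl, hc⟩; exact ⟨d₂, [], rfl, hc, rfl, rfl⟩
      · rintro ⟨d₂, t', rfl, hc, rfl, rfl⟩; exact ⟨d₂, rfl, rfl, hc⟩
    | cons b' bs' =>
      rw [show basicREM (b :: b' :: bs') = .concat (blockREM b) (basicREM (b' :: bs'))
        from rfl]
      constructor
      · intro h
        obtain ⟨w₁, w₂, σ₁, heq, hmid, h₁, h₂⟩ := concat_inv h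
        obtain ⟨d₂, ht₁, hσ₁, hc₁⟩ := (blockSat_iff (d := w₁.head) (t := w₁.tail)).1 h₁
        have hw₁ : w₁ = ⟨w₁.head, [(b.2.1, d₂)]⟩ := by
          cases w₁; simpa using ht₁
        have hmid' : w₂.head = d₂ := by rw [← hmid, hw₁]; rfl
        have heq2 : d = w₁.head ∧ t = (b.2.1, d₂) :: w₂.tail := by
          rw [hw₁] at heq
          cases w₂
          simp [DataPath.comp] at heq ⊢
          exact ⟨heq.1, heq.2⟩
        obtain ⟨hd, htt⟩ := heq2
        refine ⟨d₂, w₂.tail, htt, ?_, ?_⟩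
        · rw [hd, ← hσ₁]; exact hc₁
        · have h₂' : REMSat (basicREM (b' :: bs')) ⟨d₂, w₂.tail⟩ σ₁ σ' := by
            rw [← hmid']; exact h₂
          rw [hσ₁, ← hd] at h₂'
          exact (ih _ _ _).1 h₂'
      · rintro ⟨d₂, t', rfl, hc, hr⟩
        have h₁ : REMSat (blockREM b) ⟨d, [(b.2.1, d₂)]⟩ σ (updReg σ b.1 d) :=
          blockSat_iff.2 ⟨d₂, rfl, rfl, hc⟩
        have h₂ := (ih (updReg σ b.1 d) d₂ t').2 hr
        have := REMSat.concat (w₁ := ⟨d, [(b.2.1, d₂)]⟩) (w₂ := ⟨d₂, t'⟩)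
          (lastVal_single d d₂ b.2.1) h₁ h₂
        exact this

end Construct
section Blocks
variable {A D : Type} {k : ℕ} [NeZero k] [DecidableEq D]
open Fin.NatCast

/-- the n-th data value of a data path -/
def pathVals (w : DataPath A D) (n : ℕ) : D :=
  (w.head :: w.tail.map Prod.snd).getD n w.head

lemma pathVals_zero (w : DataPath A D) : pathVals w 0 = w.head := rfl

lemma pathVals_succ (w : DataPath A D) (n : ℕ) (p : A × D)
    (hp : w.tail[n]? = some p) : pathVals w (n + 1) = p.2 := by
  simp [pathVals, List.getD, hp]

/-- condition comparing position `i` with all positions `j < jm` -/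
def cndAux (g : ℕ → D) (i : ℕ) : ℕ → Cond k
  | 0 => .top
  | j + 1 => .conj (if g j = g i then .eq (j : Fin k) else .ne (j : Fin k)) (cndAux g i j)

lemma condSat_cndAux (g : ℕ → D) (i jm : ℕ) (d : D) (τ : Fin k → Option D) :
    CondSat d τ (cndAux g i jm) ↔
      ∀ j < jm, (τ (j : Fin k) = some d ↔ g j = g i) := by
  induction jm with
  | zero => simp [cndAux, CondSat]
  | succ jm ih =>
    show CondSat d τ _ ∧ CondSat d τ _ ↔ _
    rw [ih]
    constructor
    · rintro ⟨h1, h2⟩ j hj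
      rcases Nat.lt_succ_iff_lt_or_eq.1 hj with hj | rfl
      · exact h2 j hj
      · split_ifs at h1 with hg
        · exact ⟨fun _ => hg, fun _ => h1⟩
        · exact ⟨fun hc => absurd hc h1, fun hc => absurd hc hg⟩
    · intro h
      refine ⟨?_, fun j hj => h j (Nat.lt_succ_of_lt hj)⟩
      have := h jm (Nat.lt_succ_self jm)
      split_ifs with hg
      · exact this.2 hg
      · exact fun hc => hg (this.1 hc)

/-- the blocks of the canonical REM of a data path -/
def blks (g : ℕ → D) : ℕ → List (A × D) → List (Block A k)
  | _, [] => []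
  | n, (a, _) :: s => ([(n : Fin k)], a, cndAux g (n + 1) (n + 1)) :: blks g (n + 1) s

lemma cast_val_of_lt {j : ℕ} (hj : j < k) : ((j : Fin k) : ℕ) = j :=
  Fin.val_cast_of_lt hj

lemma runs_blks_forward (g : ℕ → D) (s : List (A × D)) (n : ℕ) (hn : n + s.length < k)
    (gq : ℕ → D) (σ : Fin k → Option D) (d : D) (t : List (A × D))
    (σ' : Fin k → Option D)
    (hr : Runs (blks g n s) σ d t σ')
    (hσ : ∀ j < n, σ (j : Fin k) = some (gq j)) (hd : gq n = d) :
    ∃ h : ℕ → D, (∀ j ≤ n, h j = gq j) ∧ t.map Prod.fst = s.map Prod.fst ∧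
      (∀ (p : ℕ) (x : A × D), t[p]? = some x → h (n + 1 + p) = x.2) ∧
      (∀ i j, n < i → i ≤ n + t.length → j < i → (h j = h i ↔ g j = g i)) := by
  induction s generalizing n gq σ d t with
  | nil =>
    obtain ⟨rfl, rfl⟩ := hr
    refine ⟨gq, fun j _ => rfl, rfl, by simp, ?_⟩
    intro i j hi hile hj
    simp at hile
    omega
  | cons ad s ihs =>
    obtain ⟨a, dv⟩ := ad
    obtain ⟨d₂, t', rfl, hc, hr'⟩ := hr
    set σ₁ := updReg σ [(n : Fin k)] d with hσ₁def
    have hnk : n < k := by omega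
    set gq' : ℕ → D := fun j => if j = n + 1 then d₂ else gq j with hgq'
    have hσ₁ : ∀ j < n + 1, σ₁ (j : Fin k) = some (gq' j) := by
      intro j hj
      have hjk : j < k := by omega
      rcases Nat.lt_succ_iff_lt_or_eq.1 hj with hj' | rfl
      · have hne : (j : Fin k) ≠ (n : Fin k) := by
          intro hcontra
          have := congrArg Fin.val hcontra
          rw [cast_val_of_lt hjk, cast_val_of_lt hnk] at this
          omega
        have : σ₁ (j : Fin k) = σ (j : Fin k) := by
          simp [hσ₁def, updReg, hne]
        rw [this, hσ j hj']
        simp [hgq', show ¬ j = n + 1 by omega]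
      · have : σ₁ (j : Fin k) = some d := by simp [hσ₁def, updReg]
        rw [this]
        simp [hgq', hd]
    have hcond : ∀ j ≤ n, (gq' j = d₂ ↔ g j = g (n + 1)) := by
      intro j hj
      have := (condSat_cndAux g (n + 1) (n + 1) d₂ σ₁).1 hc j (by omega)
      rw [hσ₁ j (by omega)] at this
      simpa using this
    have hd' : gq' (n + 1) = d₂ := by simp [hgq']
    obtain ⟨h, hh1, hh2, hh3, hh4⟩ :=
      ihs (n + 1) (by simp at hn ⊢; omega) gq' σ₁ d₂ t' hr' hσ₁ hd'
    refine ⟨h, ?_, ?_, ?_, ?_⟩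
    · intro j hj
      rw [hh1 j (by omega)]
      simp [hgq', show ¬ j = n + 1 by omega]
    · simpa using hh2
    · intro p x hp
      cases p with
      | zero =>
        simp at hp
        rw [← hp]
        have := hh1 (n + 1) le_rfl
        simpa [hd'] using this
      | succ p =>
        have : t'[p]? = some x := by simpa using hp
        have := hh3 p x this
        rw [show n + 1 + (p + 1) = n + 1 + 1 + p by omega]
        exact this
    · intro i j hi hile hj
      rcases Nat.lt_or_ge (n + 1) i with hi' | hi'
      · exact hh4 i j hi' (by simp at hile ⊢; omega) hj
      · have hieq : i = n + 1 := by omega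
        subst hieq
        have hji : j ≤ n := by omega
        rw [hh1 j (by omega), hh1 (n + 1) le_rfl, hd']
        exact hcond j hji

lemma runs_blks_self (w : DataPath A D) (s : List (A × D)) (n : ℕ)
    (hs : s = w.tail.drop n) (hn : n + s.length < k) (σ : Fin k → Option D)
    (hσ : ∀ j < n, σ (j : Fin k) = some (pathVals w j)) :
    ∃ σ', Runs (blks (pathVals w) n s) σ (pathVals w n) s σ' := by
  induction s generalizing n σ with
  | nil => exact ⟨σ, rfl, rfl⟩
  | cons ad s ihs =>
    obtain ⟨a, dv⟩ := ad
    have hget : w.tail[n]? = some (a, dv) := by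
      have := congrArg (fun l => l[0]?) hs
      simpa [List.getElem?_drop] using this.symm
    have hdv : dv = pathVals w (n + 1) := (pathVals_succ w n (a, dv) hget).symm
    have hs' : s = w.tail.drop (n + 1) := by
      have := congrArg List.tail hs
      simpa [List.tail_drop] using this
    set σ₁ := updReg σ [(n : Fin k)] (pathVals w n) with hσ₁def
    have hnk : n < k := by omega
    have hσ₁ : ∀ j < n + 1, σ₁ (j : Fin k) = some (pathVals w j) := by
      intro j hj
      have hjk : j < k := by omega
      rcases Nat.lt_succ_iff_lt_or_eq.1 hj with hj' | rfl
      · have hne : (j : Fin k) ≠ (n : Fin k) := by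
          intro hcontra
          have := congrArg Fin.val hcontra
          rw [cast_val_of_lt hjk, cast_val_of_lt hnk] at this
          omega
        have : σ₁ (j : Fin k) = σ (j : Fin k) := by simp [hσ₁def, updReg, hne]
        rw [this]; exact hσ j hj'
      · simp [hσ₁def, updReg]
    obtain ⟨σ', hσ'⟩ := ihs (n + 1) hs' (by simp at hn ⊢; omega) σ₁ hσ₁
    refine ⟨σ', pathVals w (n + 1), s, by rw [hdv], ?_, ?_⟩
    · rw [condSat_cndAux]
      intro j hj
      show updReg σ [(n : Fin k)] (pathVals w n) (j : Fin k) = some (pathVals w (n + 1)) ↔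
        pathVals w j = pathVals w (n + 1)
      rw [hσ₁def] at hσ₁
      rw [hσ₁ j hj]
      simp
    · exact hσ'

end Blocks
section Perm

lemma subtypeCongr_apply_left {α : Type} {p q : α → Prop} [DecidablePred p]
    [DecidablePred q] (e : {x // p x} ≃ {x // q x}) (f : {x // ¬p x} ≃ {x // ¬q x})
    (a : α) (h : p a) : Equiv.subtypeCongr e f a = e ⟨a, h⟩ := by
  simp [Equiv.subtypeCongr, h]

lemma exists_perm_extend {D : Type} [Countable D] [Infinite D] {k : ℕ}
    (V V' : Fin k → D) (hVV : ∀ i j, V i = V j ↔ V' i = V' j) :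
    ∃ π : D ≃ D, ∀ i, π (V i) = V' i := by
  classical
  set S : Set D := Set.range V with hS
  set S' : Set D := Set.range V' with hS'
  let F : {x // x ∈ S} → {x // x ∈ S'} := fun x => ⟨V' (Classical.choose x.2), ⟨_, rfl⟩⟩
  have hF : ∀ (x : {x // x ∈ S}), (F x : D) = V' (Classical.choose x.2) := fun _ => rfl
  have hFinj : Function.Injective F := by
    rintro x y hxy
    have h1 : V' (Classical.choose x.2) = V' (Classical.choose y.2) :=
      congrArg Subtype.val hxy
    have h2 : V (Classical.choose x.2) = V (Classical.choose y.2) := (hVV _ _).2 h1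
    have hx := Classical.choose_spec x.2
    have hy := Classical.choose_spec y.2
    exact Subtype.ext (by rw [← hx, ← hy, h2])
  have hFsurj : Function.Surjective F := by
    rintro ⟨d', hd'⟩
    obtain ⟨i, hi⟩ := hd'
    refine ⟨⟨V i, ⟨i, rfl⟩⟩, ?_⟩
    apply Subtype.ext
    rw [hF]
    have hc := Classical.choose_spec (⟨i, rfl⟩ : ∃ j, V j = V i)
    rw [(hVV _ _).1 hc, hi]
  have hSfin : S.Finite := Set.finite_range V
  have hS'fin : S'.Finite := Set.finite_range V'
  haveI i1 : Infinite {x // ¬ x ∈ S} := Set.infinite_coe_iff.2 hSfin.infinite_compl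
  haveI i2 : Infinite {x // ¬ x ∈ S'} := Set.infinite_coe_iff.2 hS'fin.infinite_compl
  obtain ⟨den1⟩ := nonempty_denumerable {x // ¬ x ∈ S}
  obtain ⟨den2⟩ := nonempty_denumerable {x // ¬ x ∈ S'}
  let e₂ : {x // ¬ x ∈ S} ≃ {x // ¬ x ∈ S'} :=
    (@Denumerable.eqv _ den1).trans (@Denumerable.eqv _ den2).symm
  refine ⟨Equiv.subtypeCongr (Equiv.ofBijective F ⟨hFinj, hFsurj⟩) e₂, ?_⟩
  intro i
  have hp : V i ∈ S := ⟨i, rfl⟩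
  rw [subtypeCongr_apply_left _ _ _ hp]
  show (F ⟨V i, hp⟩ : D) = V' i
  rw [hF]
  have hc := Classical.choose_spec (⟨i, rfl⟩ : ∃ j, V j = V i)
  exact (hVV _ _).1 hc

lemma DataPath.ext' {A D : Type} {x y : DataPath A D}
    (h1 : x.head = y.head) (h2 : x.tail = y.tail) : x = y := by
  cases x; cases y; cases h1; cases h2; rfl

end Perm

/-- two data paths can be distinguished by some REM if and only if
they are not automorphic. -/
theorem rem_distinguishes_iff_not_automorphic {A D : Type}
    [Fintype A] [Countable D] [Infinite D] (w w' : DataPath A D) :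
    (∃ (k : ℕ) (e : REM A k),
        w ∈ (REMLang e : Set (DataPath A D)) ∧
        w' ∉ (REMLang e : Set (DataPath A D))) ↔
      ¬ (∃ π : D ≃ D, w' = DataPath.dmap (⇑π) w) := by
  classical
  constructor
  · rintro ⟨k, e, hw, hw'⟩ ⟨π, rfl⟩
    exact hw' (remLang_map π hw)
  · intro hna
    haveI : NeZero (w.tail.length + 1) := ⟨Nat.succ_ne_zero _⟩
    refine ⟨w.tail.length + 1,
      basicREM (blks (pathVals w) 0 w.tail : List (Block A (w.tail.length + 1))), ?_, ?_⟩
    · obtain ⟨σ', hσ'⟩ := runs_blks_self (k := w.tail.length + 1) w w.tail 0 (by simp)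
        (by omega) (fun _ => none) (by intro j hj; omega)
      exact ⟨σ', (runs_iff _ _ σ' w.head w.tail).2 hσ'⟩
    · rintro ⟨σ', hsat⟩
      have hr := (runs_iff (blks (pathVals w) 0 w.tail) _ σ' w'.head w'.tail).1 hsat
      obtain ⟨h, hh1, hh2, hh3, hh4⟩ := runs_blks_forward (pathVals w) w.tail 0
        (by omega) (fun _ => w'.head) (fun _ => none) w'.head w'.tail σ' hr
        (by intro j hj; omega) rfl
      have hlen : w'.tail.length = w.tail.length := by
        have := congrArg List.length hh2; simpa using this
      have hh0 : h 0 = w'.head := hh1 0 le_rfl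
      have key : ∀ i j : Fin (w.tail.length + 1),
          pathVals w i = pathVals w j ↔ h i = h j := by
        intro i j
        rcases lt_trichotomy (i : ℕ) (j : ℕ) with hij | hij | hij
        · exact (hh4 j i (by omega) (by have := j.isLt; omega) hij).symm
        · have : i = j := Fin.ext hij
          subst this; simp
        · constructor
          · intro hg
            exact ((hh4 i j (by omega) (by have := i.isLt; omega) hij).2 hg.symm).symm
          · intro hh
            exact ((hh4 i j (by omega) (by have := i.isLt; omega) hij).1 hh.symm).symm
      obtain ⟨π, hπ⟩ := exists_perm_extend
        (fun i : Fin (w.tail.length + 1) => pathVals w i) (fun i => h i) key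
      apply hna
      refine ⟨π, DataPath.ext' ?_ ?_⟩
      · show w'.head = π w.head
        have := hπ 0
        simp only [Fin.val_zero] at this
        rw [pathVals_zero] at this
        rw [this, hh0]
      · show w'.tail = w.tail.map fun p => (p.1, π p.2)
        apply List.ext_getElem
        · simp [hlen]
        · intro p hp1 hp2
          have hpw : p < w.tail.length := by simpa using hp2
          have hgetw : w.tail[p]? = some w.tail[p] := List.getElem?_eq_getElem hpw
          have hgetw' : w'.tail[p]? = some w'.tail[p] := List.getElem?_eq_getElem hp1
          have hfst : (w'.tail[p]).1 = (w.tail[p]).1 := by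
            have := congrArg (fun l => l[p]?) hh2
            simp only [List.getElem?_map, hgetw, hgetw', Option.map_some] at this
            exact Option.some_injective _ this
          have hsnd : (w'.tail[p]).2 = h (p + 1) := by
            have := hh3 p _ hgetw'
            rw [show 0 + 1 + p = p + 1 by omega] at this
            exact this.symm
          have hwval : (w.tail[p]).2 = pathVals w (p + 1) :=
            (pathVals_succ w p _ hgetw).symm
          have hfin : p + 1 < w.tail.length + 1 := by omega
          have hπ' := hπ ⟨p + 1, hfin⟩
          simp only at hπ'
          rw [List.getElem_map]
          refine Prod.ext hfst ?_
          show (w'.tail[p]).2 = π (w.tail[p]).2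
          rw [hsnd, hwval, ← hπ']
end

section
/- If a binary relation S on the nodes of a data graph G is definable by a k-REM, then S is definable by a union of |S| basic k-REMs, where for each pair (u,v) ∈ S one of them is a k-REM witness for (u,v) in S; that is, S = { (u,v) | u →w v for some w ∈ L(e₁) ∪ … ∪ L(e_{|S|}) } for such witnesses e₁,…,e_{|S|}. -/
namespace WitnessProof

variable {V A D : Type} {k : ℕ}

lemma updReg_nil (σ : Fin k → Option D) (d : D) : updReg (D := D) σ [] d = σ := by
  funext i; simp [updReg]

lemma updReg_updReg (σ : Fin k → Option D) (rs rs' : List (Fin k)) (d : D) :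
    updReg (updReg σ rs d) rs' d = updReg σ (rs' ++ rs) d := by
  funext i
  by_cases h : i ∈ rs' <;> by_cases h' : i ∈ rs <;> simp [updReg, h, h']

/-- Push a condition through a bind of `rs` at the same data value. -/
def pushCond (rs : List (Fin k)) : Cond k → Cond k
  | .top => .top
  | .eq i => if i ∈ rs then .top else .eq i
  | .ne i => if i ∈ rs then .neg .top else .ne i
  | .conj c₁ c₂ => .conj (pushCond rs c₁) (pushCond rs c₂)
  | .disj c₁ c₂ => .disj (pushCond rs c₁) (pushCond rs c₂)
  | .neg c => .neg (pushCond rs c)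

lemma pushCond_iff (rs : List (Fin k)) (c : Cond k) (σ : Fin k → Option D) (d : D) :
    CondSat d σ (pushCond rs c) ↔ CondSat d (updReg σ rs d) c := by
  induction c with
  | top => simp [pushCond, CondSat]
  | eq i => by_cases h : i ∈ rs <;> simp [pushCond, CondSat, updReg, h]
  | ne i => by_cases h : i ∈ rs <;> simp [pushCond, CondSat, updReg, h]
  | conj c₁ c₂ ih₁ ih₂ => simp only [pushCond, CondSat]; rw [ih₁, ih₂]
  | disj c₁ c₂ ih₁ ih₂ => simp only [pushCond, CondSat]; rw [ih₁, ih₂]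
  | neg c ih => simp only [pushCond, CondSat]; rw [ih]

lemma condSat_bot (c : Cond k) (d d' : D) :
    CondSat d (fun _ => none) c ↔ CondSat d' (fun _ => none) c := by
  induction c with
  | top => simp [CondSat]
  | eq i => simp [CondSat]
  | ne i => simp [CondSat]
  | conj c₁ c₂ ih₁ ih₂ => simp only [CondSat]; rw [ih₁, ih₂]
  | disj c₁ c₂ ih₁ ih₂ => simp only [CondSat]; rw [ih₁, ih₂]
  | neg c ih => simp only [CondSat]; rw [ih]

/-- Last value of a path given by head `d` and tail `t`. -/
def lv (d : D) (t : List (A × D)) : D := DataPath.lastVal ⟨d, t⟩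

@[simp] lemma lv_nil (d : D) : lv (A := A) d [] = d := rfl

@[simp] lemma lv_cons (d₁ d₂ : D) (a : A) (t : List (A × D)) :
    lv d₁ ((a, d₂) :: t) = lv d₂ t := by
  cases t with
  | nil => rfl
  | cons x xs => simp [lv, DataPath.lastVal, List.getLast?]

lemma lv_append (d : D) (t₁ t₂ : List (A × D)) :
    lv d (t₁ ++ t₂) = lv (lv d t₁) t₂ := by
  induction t₁ generalizing d with
  | nil => simp
  | cons x xs ih => obtain ⟨a, d₂⟩ := x; simp [ih]

@[simp] lemma lastVal_eq_lv (d : D) (t : List (A × D)) :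
    DataPath.lastVal (A := A) ⟨d, t⟩ = lv d t := rfl

/-- Semantics of a list of blocks, with explicit chaining. -/
inductive BSat : List (Block A k) → DataPath A D → (Fin k → Option D) →
    (Fin k → Option D) → Prop
  | nil (d : D) (σ : Fin k → Option D) : BSat [] ⟨d, []⟩ σ σ
  | cons {rs a c bs d₁ d₂ t σ σ'} :
      CondSat d₂ (updReg σ rs d₁) c →
      BSat bs ⟨d₂, t⟩ (updReg σ rs d₁) σ' →
      BSat ((rs, a, c) :: bs) ⟨d₁, (a, d₂) :: t⟩ σ σ'

lemma basicREM_cons {b : Block A k} {bs : List (Block A k)} (h : bs ≠ []) :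
    basicREM (b :: bs) = .concat (blockREM b) (basicREM bs) := by
  cases bs with
  | nil => exact absurd rfl h
  | cons x xs => rfl

lemma blockREM_sat {rs : List (Fin k)} {a : A} {c : Cond k} {d₁ d₂ : D}
    {σ : Fin k → Option D} (hc : CondSat d₂ (updReg σ rs d₁) c) :
    REMSat (D := D) (blockREM (rs, a, c)) ⟨d₁, [(a, d₂)]⟩ σ (updReg σ rs d₁) := by
  exact REMSat.bind (REMSat.test (REMSat.letter a d₁ d₂ _) hc)

lemma blockREM_sat_inv {rs : List (Fin k)} {a : A} {c : Cond k} {w : DataPath A D}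
    {σ σ' : Fin k → Option D} (h : REMSat (blockREM (rs, a, c)) w σ σ') :
    ∃ d₁ d₂, w = ⟨d₁, [(a, d₂)]⟩ ∧ σ' = updReg σ rs d₁ ∧
      CondSat d₂ (updReg σ rs d₁) c := by
  cases h with
  | bind h =>
    cases h with
    | test h hc =>
      cases h with
      | letter => exact ⟨_, _, rfl, rfl, hc⟩

lemma bsat_to_rem {bs : List (Block A k)} {w : DataPath A D}
    {σ σ' : Fin k → Option D} (h : BSat bs w σ σ') :
    REMSat (basicREM bs) w σ σ' := by
  induction h with
  | nil d σ => exact REMSat.eps d σ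
  | @cons rs a c bs d₁ d₂ t σ σ' hc hb ih =>
    cases bs with
    | nil =>
      cases hb
      exact blockREM_sat hc
    | cons x xs =>
      rw [basicREM_cons (by simp)]
      have := REMSat.concat (w₁ := ⟨d₁, [(a, d₂)]⟩) (w₂ := ⟨d₂, t⟩)
        (by simp) (blockREM_sat hc) ih
      exact this

lemma rem_to_bsat {bs : List (Block A k)} {w : DataPath A D}
    {σ σ' : Fin k → Option D} (h : REMSat (basicREM bs) w σ σ') :
    BSat bs w σ σ' := by
  induction bs generalizing w σ with
  | nil =>
    cases h
    exact BSat.nil _ _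
  | cons b bs ih =>
    obtain ⟨rs, a, c⟩ := b
    cases bs with
    | nil =>
      obtain ⟨d₁, d₂, rfl, rfl, hc⟩ := blockREM_sat_inv h
      exact BSat.cons hc (BSat.nil _ _)
    | cons x xs =>
      rw [basicREM_cons (by simp)] at h
      cases h with
      | @concat _ _ w₁ w₂ _ σ₁ _ hal h₁ h₂ =>
        obtain ⟨d₁, d₂, rfl, rfl, hc⟩ := blockREM_sat_inv h₁
        have hw₂ : w₂ = ⟨d₂, w₂.tail⟩ := by
          cases w₂; simp at hal ⊢; exact hal.symm
        rw [hw₂] at h₂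
        have : (DataPath.comp ⟨d₁, [(a, d₂)]⟩ w₂) = ⟨d₁, (a, d₂) :: w₂.tail⟩ := rfl
        rw [this]
        exact BSat.cons hc (ih h₂)

lemma BSat_append {bs₁ bs₂ : List (Block A k)} {d : D} {t₁ t₂ : List (A × D)}
    {σ σ₁ σ' : Fin k → Option D}
    (h₁ : BSat bs₁ ⟨d, t₁⟩ σ σ₁) (h₂ : BSat bs₂ ⟨lv d t₁, t₂⟩ σ₁ σ') :
    BSat (bs₁ ++ bs₂) ⟨d, t₁ ++ t₂⟩ σ σ' := by
  induction bs₁ generalizing d t₁ σ with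
  | nil => cases h₁; simpa using h₂
  | cons b bs ih =>
    cases h₁ with
    | cons hc hb =>
      simp only [lv_cons] at h₂
      exact BSat.cons hc (ih hb h₂)

lemma BSat_append_inv {bs₁ bs₂ : List (Block A k)} {d : D} {t : List (A × D)}
    {σ σ' : Fin k → Option D} (h : BSat (bs₁ ++ bs₂) ⟨d, t⟩ σ σ') :
    ∃ t₁ t₂ σ₁, t = t₁ ++ t₂ ∧ BSat bs₁ ⟨d, t₁⟩ σ σ₁ ∧
      BSat bs₂ ⟨lv d t₁, t₂⟩ σ₁ σ' := by
  induction bs₁ generalizing d t σ with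
  | nil => exact ⟨[], t, σ, by simp, BSat.nil d σ, by simpa using h⟩
  | cons b bs ih =>
    cases h with
    | @cons rs a c _ d₁ d₂ t' _ _ hc hb =>
      obtain ⟨t₁, t₂, σ₁, rfl, hx, hy⟩ := ih hb
      exact ⟨(a, d₂) :: t₁, t₂, σ₁, rfl, BSat.cons hc hx, by simpa using hy⟩

/-- Conjoin a condition onto the last block. -/
def modLast : List (Block A k) → Cond k → List (Block A k)
  | [], _ => []
  | [(rs, a, c)], c' => [(rs, a, .conj c c')]
  | b :: bs, c' => b :: modLast bs c'

lemma BSat_modLast_intro {bs : List (Block A k)} {c' : Cond k} {d : D}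
    {t : List (A × D)} {σ σ' : Fin k → Option D}
    (h : BSat bs ⟨d, t⟩ σ σ') (hc : CondSat (lv d t) σ' c') :
    BSat (modLast bs c') ⟨d, t⟩ σ σ' := by
  induction bs generalizing d t σ with
  | nil => exact h
  | cons b bs ih =>
    cases h with
    | @cons rs a c _ d₁ d₂ t' _ _ hcb hb =>
      cases bs with
      | nil =>
        cases hb
        simp only [lv_cons, lv_nil] at hc
        exact BSat.cons ⟨hcb, hc⟩ (BSat.nil _ _)
      | cons x xs =>
        simp only [lv_cons] at hc
        exact BSat.cons hcb (ih hb hc)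

lemma BSat_modLast_elim {bs : List (Block A k)} {c' : Cond k} {d : D}
    {t : List (A × D)} {σ σ' : Fin k → Option D}
    (h : BSat (modLast bs c') ⟨d, t⟩ σ σ') :
    BSat bs ⟨d, t⟩ σ σ' ∧ (bs ≠ [] → CondSat (lv d t) σ' c') := by
  induction bs generalizing d t σ with
  | nil => exact ⟨h, fun hne => absurd rfl hne⟩
  | cons b bs ih =>
    obtain ⟨rs, a, c⟩ := b
    cases bs with
    | nil =>
      cases h with
      | cons hcb hb =>
        cases hb
        exact ⟨BSat.cons hcb.1 (BSat.nil _ _), fun _ => by simpa using hcb.2⟩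
    | cons x xs =>
      cases h with
      | cons hcb hb =>
        obtain ⟨h₁, h₂⟩ := ih hb
        exact ⟨BSat.cons hcb h₁, fun _ => by simpa using h₂ (by simp)⟩

lemma BSat_merge {rs₁ rs : List (Fin k)} {a : A} {c : Cond k}
    {bs : List (Block A k)} {d : D} {t : List (A × D)} {σ σ' : Fin k → Option D} :
    BSat ((rs₁ ++ rs, a, c) :: bs) ⟨d, t⟩ σ σ' ↔
      BSat ((rs₁, a, c) :: bs) ⟨d, t⟩ (updReg σ rs d) σ' := by
  constructor
  · intro h
    cases h with
    | cons hc hb =>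
      rw [← updReg_updReg] at hc hb
      exact BSat.cons hc hb
  · intro h
    cases h with
    | cons hc hb =>
      rw [updReg_updReg] at hc hb
      exact BSat.cons hc hb

end WitnessProof

namespace WitnessProof

variable {V A D : Type} {k : ℕ}

/-- Sequential composition of two "plans" `(c₁, b₁, R₁)` and `(c₂, b₂, R₂)`. -/
lemma seqPlan (c₁ c₂ : Cond k) (b₁ b₂ : List (Block A k)) (R₁ R₂ : List (Fin k)) :
    ∃ (c : Cond k) (bs : List (Block A k)) (R : List (Fin k)),
      (∀ (d : D) (t₁ t₂ : List (A × D)) (σ σ₁₀ σ₂₀ : Fin k → Option D),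
        CondSat d σ c₁ → BSat b₁ ⟨d, t₁⟩ σ σ₁₀ →
        CondSat (lv d t₁) (updReg σ₁₀ R₁ (lv d t₁)) c₂ →
        BSat b₂ ⟨lv d t₁, t₂⟩ (updReg σ₁₀ R₁ (lv d t₁)) σ₂₀ →
        CondSat d σ c ∧ ∃ σ₀, BSat bs ⟨d, t₁ ++ t₂⟩ σ σ₀ ∧
          updReg σ₂₀ R₂ (lv (lv d t₁) t₂) = updReg σ₀ R (lv d (t₁ ++ t₂))) ∧
      (∀ (d : D) (t : List (A × D)) (τ τ₀ : Fin k → Option D),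
        CondSat d τ c → BSat bs ⟨d, t⟩ τ τ₀ →
        ∃ t₁ t₂ τ₁₀ τ₂₀, t = t₁ ++ t₂ ∧
          CondSat d τ c₁ ∧ BSat b₁ ⟨d, t₁⟩ τ τ₁₀ ∧
          CondSat (lv d t₁) (updReg τ₁₀ R₁ (lv d t₁)) c₂ ∧
          BSat b₂ ⟨lv d t₁, t₂⟩ (updReg τ₁₀ R₁ (lv d t₁)) τ₂₀ ∧
          updReg τ₀ R (lv d t) = updReg τ₂₀ R₂ (lv (lv d t₁) t₂)) := by
  have hpush := fun (c : Cond k) (σ : Fin k → Option D) (d : D) =>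
    pushCond_iff R₁ c σ d
  cases hb1 : b₁ with
  | nil =>
    cases hb2 : b₂ with
    | nil =>
      -- both empty
      refine ⟨.conj c₁ (pushCond R₁ c₂), [], R₂ ++ R₁, ?_, ?_⟩
      · intro d t₁ t₂ σ σ₁₀ σ₂₀ h₁ hB₁ h₂ hB₂
        cases hB₁; cases hB₂
        refine ⟨⟨h₁, (hpush c₂ σ d).mpr (by simpa using h₂)⟩, σ, BSat.nil _ _, ?_⟩
        simp [updReg_updReg]
      · intro d t τ τ₀ hc hB
        cases hB
        refine ⟨[], [], τ, updReg τ R₁ d, by simp, hc.1, BSat.nil _ _, ?_, ?_, ?_⟩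
        · simpa using (hpush c₂ τ d).mp hc.2
        · exact BSat.nil _ _
        · simp [updReg_updReg]
    | cons hd tl =>
      obtain ⟨rs, a, cb⟩ := hd
      -- b₁ empty, b₂ nonempty
      refine ⟨.conj c₁ (pushCond R₁ c₂), (rs ++ R₁, a, cb) :: tl, R₂, ?_, ?_⟩
      · intro d t₁ t₂ σ σ₁₀ σ₂₀ h₁ hB₁ h₂ hB₂
        cases hB₁
        refine ⟨⟨h₁, (hpush c₂ σ d).mpr (by simpa using h₂)⟩, σ₂₀, ?_, ?_⟩
        · simpa using BSat_merge.mpr (by simpa using hB₂)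
        · simp
      · intro d t τ τ₀ hc hB
        have hB' := BSat_merge.mp hB
        refine ⟨[], t, τ, τ₀, by simp, hc.1, BSat.nil _ _, ?_, by simpa using hB', by simp⟩
        simpa using (hpush c₂ τ d).mp hc.2
  | cons x xs =>
    have hne : x :: xs ≠ [] := by simp
    cases hb2 : b₂ with
    | nil =>
      -- b₁ nonempty, b₂ empty
      refine ⟨c₁, modLast (x :: xs) (pushCond R₁ c₂), R₂ ++ R₁, ?_, ?_⟩
      · intro d t₁ t₂ σ σ₁₀ σ₂₀ h₁ hB₁ h₂ hB₂
        cases hB₂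
        refine ⟨h₁, σ₁₀, ?_, ?_⟩
        · simpa using BSat_modLast_intro hB₁ ((hpush c₂ σ₁₀ (lv d t₁)).mpr h₂)
        · simp [updReg_updReg]
      · intro d t τ τ₀ hc hB
        obtain ⟨h₁, h₂⟩ := BSat_modLast_elim hB
        refine ⟨t, [], τ₀, updReg τ₀ R₁ (lv d t), by simp, hc, h₁, ?_, BSat.nil _ _, ?_⟩
        · simpa using (hpush c₂ τ₀ (lv d t)).mp (h₂ hne)
        · simp [updReg_updReg]
    | cons hd tl =>
      obtain ⟨rs, a, cb⟩ := hd
      -- both nonempty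
      refine ⟨c₁, modLast (x :: xs) (pushCond R₁ c₂) ++ ((rs ++ R₁, a, cb) :: tl),
        R₂, ?_, ?_⟩
      · intro d t₁ t₂ σ σ₁₀ σ₂₀ h₁ hB₁ h₂ hB₂
        have hm := BSat_modLast_intro hB₁ ((hpush c₂ σ₁₀ (lv d t₁)).mpr h₂)
        have hmm : BSat ((rs ++ R₁, a, cb) :: tl) ⟨lv d t₁, t₂⟩ σ₁₀ σ₂₀ :=
          BSat_merge.mpr hB₂
        refine ⟨h₁, σ₂₀, BSat_append hm hmm, by rw [lv_append]⟩
      · intro d t τ τ₀ hc hB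
        obtain ⟨t₁, t₂, τ₁, rfl, hx, hy⟩ := BSat_append_inv hB
        obtain ⟨h₁, h₂⟩ := BSat_modLast_elim hx
        refine ⟨t₁, t₂, τ₁, τ₀, rfl, hc, h₁, ?_, BSat_merge.mp hy, by rw [lv_append]⟩
        exact (hpush c₂ τ₁ (lv d t₁)).mp (h₂ hne)

end WitnessProof

namespace WitnessProof

variable {V A D : Type} {k : ℕ}

@[simp] lemma comp_mk (d₁ d₂ : D) (t₁ t₂ : List (A × D)) :
    DataPath.comp (A := A) ⟨d₁, t₁⟩ ⟨d₂, t₂⟩ = ⟨d₁, t₁ ++ t₂⟩ := rfl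

/-- Main lemma: every satisfaction of an REM is refined by a plan
`(c₀, bs, R)` whose language (relative to the start assignment, after
checking `c₀` at the head) is contained in that of the REM. -/
lemma main {e : REM A k} {w : DataPath A D} {σ σ' : Fin k → Option D}
    (h : REMSat e w σ σ') :
    ∃ (c₀ : Cond k) (bs : List (Block A k)) (R : List (Fin k)),
      (CondSat w.head σ c₀ ∧ ∃ σ₀, BSat bs w σ σ₀ ∧ σ' = updReg σ₀ R w.lastVal) ∧
      (∀ (d' : D) (t' : List (A × D)) (τ τ₀ : Fin k → Option D),
        CondSat d' τ c₀ → BSat bs ⟨d', t'⟩ τ τ₀ →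
        REMSat e ⟨d', t'⟩ τ (updReg τ₀ R (lv d' t'))) := by
  induction h with
  | eps d σ =>
    refine ⟨.top, [], [], ⟨trivial, σ, BSat.nil d σ, by rw [updReg_nil]⟩, ?_⟩
    intro d' t' τ τ₀ _ hB
    cases hB
    rw [updReg_nil]
    exact REMSat.eps _ _
  | letter a d₁ d₂ σ =>
    refine ⟨.top, [([], a, .top)], [],
      ⟨trivial, updReg σ [] d₁, BSat.cons trivial (BSat.nil d₂ _), ?_⟩, ?_⟩
    · rw [updReg_nil, updReg_nil]
    · intro d' t' τ τ₀ _ hB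
      cases hB with
      | cons hc hB' =>
        cases hB'
        rw [updReg_nil, updReg_nil]
        exact REMSat.letter a _ _ τ
  | plusL h ih =>
    obtain ⟨c₀, bs, R, hcom, hsnd⟩ := ih
    exact ⟨c₀, bs, R, hcom, fun d' t' τ τ₀ hc hB => REMSat.plusL (hsnd d' t' τ τ₀ hc hB)⟩
  | plusR h ih =>
    obtain ⟨c₀, bs, R, hcom, hsnd⟩ := ih
    exact ⟨c₀, bs, R, hcom, fun d' t' τ τ₀ hc hB => REMSat.plusR (hsnd d' t' τ τ₀ hc hB)⟩
  | @concat e₁ e₂ w₁ w₂ σ σ₁ σ' hal h₁ h₂ ih₁ ih₂ =>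
    obtain ⟨c₁, b₁, R₁, ⟨hc₁, σ₁₀, hB₁, hσ₁⟩, hs₁⟩ := ih₁
    obtain ⟨c₂, b₂, R₂, ⟨hc₂, σ₂₀, hB₂, hσ₂⟩, hs₂⟩ := ih₂
    obtain ⟨c, bs, R, hcomp, hsound⟩ := seqPlan (D := D) c₁ c₂ b₁ b₂ R₁ R₂
    obtain ⟨d₁, t₁⟩ := w₁
    obtain ⟨d₂, t₂⟩ := w₂
    simp only [lastVal_eq_lv] at hal hσ₁
    subst hal
    subst hσ₁
    obtain ⟨hcC, σ₀, hBc, heq⟩ := hcomp d₁ t₁ t₂ σ σ₁₀ σ₂₀ hc₁ hB₁ hc₂ hB₂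
    refine ⟨c, bs, R, ⟨hcC, σ₀, by simpa using hBc, ?_⟩, ?_⟩
    · rw [hσ₂]; simpa [lv_append] using heq
    · intro d' t' τ τ₀ hc hB
      obtain ⟨t₁', t₂', τ₁₀, τ₂₀, rfl, hcc₁, hBB₁, hcc₂, hBB₂, hfin⟩ :=
        hsound d' t' τ τ₀ hc hB
      have r₁ := hs₁ d' t₁' τ τ₁₀ hcc₁ hBB₁
      have r₂ := hs₂ (lv d' t₁') t₂' _ τ₂₀ hcc₂ hBB₂
      have := REMSat.concat (w₁ := ⟨d', t₁'⟩) (w₂ := ⟨lv d' t₁', t₂'⟩) rfl r₁ r₂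
      rw [comp_mk] at this
      rw [hfin]
      convert this using 2
  | @iterBase e w σ σ' h ih =>
    obtain ⟨c₀, bs, R, hcom, hsnd⟩ := ih
    exact ⟨c₀, bs, R, hcom,
      fun d' t' τ τ₀ hc hB => REMSat.iterBase (hsnd d' t' τ τ₀ hc hB)⟩
  | @iterStep e w₁ w₂ σ σ₁ σ' hal h₁ h₂ ih₁ ih₂ =>
    obtain ⟨c₁, b₁, R₁, ⟨hc₁, σ₁₀, hB₁, hσ₁⟩, hs₁⟩ := ih₁
    obtain ⟨c₂, b₂, R₂, ⟨hc₂, σ₂₀, hB₂, hσ₂⟩, hs₂⟩ := ih₂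
    obtain ⟨c, bs, R, hcomp, hsound⟩ := seqPlan (D := D) c₁ c₂ b₁ b₂ R₁ R₂
    obtain ⟨d₁, t₁⟩ := w₁
    obtain ⟨d₂, t₂⟩ := w₂
    simp only [lastVal_eq_lv] at hal hσ₁
    subst hal
    subst hσ₁
    obtain ⟨hcC, σ₀, hBc, heq⟩ := hcomp d₁ t₁ t₂ σ σ₁₀ σ₂₀ hc₁ hB₁ hc₂ hB₂
    refine ⟨c, bs, R, ⟨hcC, σ₀, by simpa using hBc, ?_⟩, ?_⟩
    · rw [hσ₂]; simpa [lv_append] using heq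
    · intro d' t' τ τ₀ hc hB
      obtain ⟨t₁', t₂', τ₁₀, τ₂₀, rfl, hcc₁, hBB₁, hcc₂, hBB₂, hfin⟩ :=
        hsound d' t' τ τ₀ hc hB
      have r₁ := hs₁ d' t₁' τ τ₁₀ hcc₁ hBB₁
      have r₂ := hs₂ (lv d' t₁') t₂' _ τ₂₀ hcc₂ hBB₂
      have := REMSat.iterStep (w₁ := ⟨d', t₁'⟩) (w₂ := ⟨lv d' t₁', t₂'⟩) rfl r₁ r₂
      rw [comp_mk] at this
      rw [hfin]
      convert this using 2
  | @test e c w σ σ' h hcnd ih =>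
    obtain ⟨c₀, bs, R, ⟨hc₀, σ₀, hB, hσ'⟩, hsnd⟩ := ih
    obtain ⟨cX, bsX, RX, hcomp, hsound⟩ := seqPlan (D := D) c₀ c bs [] R []
    obtain ⟨d, t⟩ := w
    simp only [lastVal_eq_lv] at hcnd hσ'
    subst hσ'
    obtain ⟨hcC, σ₀', hBc, heq⟩ := hcomp d t [] σ σ₀ (updReg σ₀ R (lv d t))
      hc₀ hB hcnd (BSat.nil _ _)
    refine ⟨cX, bsX, RX, ⟨hcC, σ₀', by simpa using hBc, ?_⟩, ?_⟩
    · simpa [updReg_nil] using heq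
    · intro d' t' τ τ₀ hc hBX
      obtain ⟨t₁, t₂, τ₁₀, τ₂₀, rfl, hcc₁, hBB₁, hcc₂, hBB₂, hfin⟩ :=
        hsound d' t' τ τ₀ hc hBX
      cases hBB₂
      have r := hsnd d' t₁ τ τ₁₀ hcc₁ hBB₁
      have := REMSat.test r (by simpa using hcc₂)
      simp only [List.append_nil] at *
      rw [hfin]
      simpa [updReg_nil] using this
  | @bind rs e w σ σ' h ih =>
    obtain ⟨c₀, bs, R, ⟨hc₀, σ₀, hB, hσ'⟩, hsnd⟩ := ih
    obtain ⟨cX, bsX, RX, hcomp, hsound⟩ := seqPlan (D := D) .top c₀ [] bs rs R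
    obtain ⟨d, t⟩ := w
    simp only [lastVal_eq_lv] at hσ'
    obtain ⟨hcC, σ₀', hBc, heq⟩ := hcomp d [] t σ σ σ₀ trivial (BSat.nil _ _)
      (by simpa using hc₀) (by simpa using hB)
    refine ⟨cX, bsX, RX, ⟨hcC, σ₀', by simpa using hBc, ?_⟩, ?_⟩
    · rw [hσ']; simpa using heq
    · intro d' t' τ τ₀ hc hBX
      obtain ⟨t₁, t₂, τ₁₀, τ₂₀, rfl, hcc₁, hBB₁, hcc₂, hBB₂, hfin⟩ :=
        hsound d' t' τ τ₀ hc hBX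
      cases hBB₁
      have r := hsnd d' t₂ (updReg τ rs d') τ₂₀ (by simpa using hcc₂)
        (by simpa using hBB₂)
      have := REMSat.bind (rs := rs) r
      simp only [List.nil_append] at *
      rw [hfin]
      simpa using this

end WitnessProof


/-- if `S` is definable by a `k`-REM then it is definable by a union
of `|S|` basic `k`-REMs, one `k`-REM witness for each pair of `S`. -/
theorem definable_by_union_of_witnesses {V A D : Type}
    [Fintype V] [Fintype A] [Countable D] [Infinite D]
    (G : DataGraph V A D) (k : ℕ) (S : Set (V × V))
    (hdef : ∃ e : REM A k,
      S = {p : V × V | ∃ w : DataPath A D, w ∈ REMLang e ∧ Connects G p.1 w p.2}) :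
    ∃ f : V × V → List (Block A k),
      (∀ p ∈ S, IsWitness G S p.1 p.2 (f p)) ∧
      S = {q : V × V | ∃ p ∈ S, ∃ w : DataPath A D,
              w ∈ REMLang (basicREM (f p)) ∧ Connects G q.1 w q.2} := by
  classical
  obtain ⟨e, hS⟩ := hdef
  have key : ∀ p : V × V, p ∈ S → ∃ bs : List (Block A k),
      IsWitness G S p.1 p.2 bs := by
    intro p hp
    have hp' := hp
    rw [hS] at hp'
    obtain ⟨w, hw, hconn⟩ := hp'
    obtain ⟨σ', hsat⟩ := hw
    obtain ⟨c₀, bs, R, ⟨hc₀, σ₀, hB, _⟩, hsnd⟩ := WitnessProof.main hsat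
    refine ⟨bs, ⟨w, ⟨σ₀, WitnessProof.bsat_to_rem hB⟩, hconn⟩, ?_⟩
    intro u' v' w' hw' hconn'
    obtain ⟨τ₀, hsat'⟩ := hw'
    have hB' := WitnessProof.rem_to_bsat hsat'
    obtain ⟨d', t'⟩ := w'
    have hc' : CondSat d' (fun _ => none) c₀ :=
      (WitnessProof.condSat_bot c₀ d' w.head).mpr hc₀
    have hrem := hsnd d' t' _ τ₀ hc' hB'
    rw [hS]
    exact ⟨⟨d', t'⟩, ⟨_, hrem⟩, hconn'⟩
  choose g hg using key
  refine ⟨fun p => if h : p ∈ S then g p h else [], ?_, ?_⟩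
  · intro p hp
    simpa [hp] using hg p hp
  · ext q
    constructor
    · intro hq
      refine ⟨q, hq, ?_⟩
      have h1 := (hg q hq).1
      simpa [hq] using h1
    · rintro ⟨p, hp, w, hw, hconn⟩
      have h2 := (hg p hp).2 q.1 q.2 w (by simpa [hp] using hw) hconn
      simpa using h2
end

section
/- Let G be a data graph with δ distinct data values. A binary relation S on the nodes of G is definable by some REM (with any number of registers) if and only if S is definable by a δ-REM. -/
namespace RegCollapse

variable {A D : Type} {k n δ : ℕ}

/-- Atomic items of a linearized REM. -/
inductive Item (A : Type) (k : ℕ) where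
  | letter : A → Item A k
  | bind : List (Fin k) → Item A k
  | test : Cond k → Item A k

/-- The REM of a single item. -/
def itemREM : Item A k → REM A k
  | .letter a => .letter a
  | .bind rs => .bind rs .eps
  | .test c => .test .eps c

/-- The REM of a list of items. -/
def toREM : List (Item A k) → REM A k
  | [] => .eps
  | x :: l => .concat (itemREM x) (toREM l)

/-- Direct operational semantics of item lists. -/
inductive ItemRun : List (Item A k) → DataPath A D →
    (Fin k → Option D) → (Fin k → Option D) → Prop
  | nil (d : D) (σ : Fin k → Option D) : ItemRun [] ⟨d, []⟩ σ σ
  | letter {l a d₁ d₂ t σ σ'} : ItemRun l ⟨d₂, t⟩ σ σ' →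
      ItemRun (.letter a :: l) ⟨d₁, (a, d₂) :: t⟩ σ σ'
  | bind {l rs d t σ σ'} : ItemRun l ⟨d, t⟩ (updReg σ rs d) σ' →
      ItemRun (.bind rs :: l) ⟨d, t⟩ σ σ'
  | test {l c d t σ σ'} : CondSat d σ c → ItemRun l ⟨d, t⟩ σ σ' →
      ItemRun (.test c :: l) ⟨d, t⟩ σ σ'

@[simp] lemma lastVal_nil (d : D) : (⟨d, []⟩ : DataPath A D).lastVal = d := rfl

lemma lastVal_cons (d₁ d₂ : D) (a : A) (t : List (A × D)) :
    (⟨d₁, (a, d₂) :: t⟩ : DataPath A D).lastVal = (⟨d₂, t⟩ : DataPath A D).lastVal := by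
  cases t with
  | nil => rfl
  | cons x xs =>
      cases hgl : (x :: xs).getLast? with
      | none => simp at hgl
      | some y => simp [DataPath.lastVal, List.getLast?_cons_cons, hgl]

@[simp] lemma comp_nil (w : DataPath A D) (x : D) :
    w.comp ⟨x, []⟩ = w := by
  cases w; simp [DataPath.comp]

lemma itemRun_append {l₁ : List (Item A k)} {w₁ : DataPath A D} {σ σ₁ : Fin k → Option D}
    (h₁ : ItemRun l₁ w₁ σ σ₁) :
    ∀ {l₂ w₂ σ'}, ItemRun l₂ w₂ σ₁ σ' → w₁.lastVal = w₂.head →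
      ItemRun (l₁ ++ l₂) (w₁.comp w₂) σ σ' := by
  induction h₁ with
  | nil d σ =>
      intro l₂ w₂ σ' h₂ hh
      simp only [lastVal_nil] at hh
      have he : (⟨d, []⟩ : DataPath A D).comp w₂ = w₂ := by
        cases w₂
        simp only [DataPath.comp, List.nil_append] at hh ⊢
        rw [hh]
      rw [List.nil_append, he]
      exact h₂
  | letter h ih =>
      intro l₂ w₂ σ' h₂ hh
      rw [lastVal_cons] at hh
      exact ItemRun.letter (ih h₂ hh)
  | bind h ih =>
      intro l₂ w₂ σ' h₂ hh
      exact ItemRun.bind (ih h₂ hh)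
  | test hc h ih =>
      intro l₂ w₂ σ' h₂ hh
      exact ItemRun.test hc (ih h₂ hh)

lemma itemRun_split {l₁ l₂ : List (Item A k)} :
    ∀ {w : DataPath A D} {σ σ'}, ItemRun (l₁ ++ l₂) w σ σ' →
      ∃ w₁ w₂ σ₁, w = w₁.comp w₂ ∧ w₁.lastVal = w₂.head ∧
        ItemRun l₁ w₁ σ σ₁ ∧ ItemRun l₂ w₂ σ₁ σ' := by
  induction l₁ with
  | nil =>
      intro w σ σ' h
      exact ⟨⟨w.head, []⟩, w, σ, by cases w; rfl, rfl, ItemRun.nil _ _, h⟩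
  | cons x l₁ ih =>
      intro w σ σ' h
      cases x with
      | letter a =>
          cases h with
          | @letter l a d₁ d₂ t σ σ'' h =>
            obtain ⟨w₁, w₂, σ₁, heq, hh, r₁, r₂⟩ := ih h
            have hhd : w₁.head = d₂ := by
              have := congrArg DataPath.head heq; simpa [DataPath.comp] using this.symm
            have htl : t = w₁.tail ++ w₂.tail := by
              have := congrArg DataPath.tail heq; simpa [DataPath.comp] using this
            have hw₁ : (⟨d₂, w₁.tail⟩ : DataPath A D) = w₁ := by
              cases w₁; simp only at hhd ⊢; rw [hhd]
            refine ⟨⟨d₁, (a, d₂) :: w₁.tail⟩, w₂, σ₁, ?_, ?_, ?_, r₂⟩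
            · simp [DataPath.comp, htl]
            · rw [lastVal_cons, hw₁]; exact hh
            · exact ItemRun.letter (hw₁ ▸ r₁)
      | bind rs =>
          cases h with
          | @bind l rs d t σ σ'' h =>
            obtain ⟨w₁, w₂, σ₁, heq, hh, r₁, r₂⟩ := ih h
            have hhd : w₁.head = d := by
              have := congrArg DataPath.head heq; simpa [DataPath.comp] using this.symm
            refine ⟨w₁, w₂, σ₁, heq, hh, ?_, r₂⟩
            cases w₁
            simp only at hhd; subst hhd
            exact ItemRun.bind r₁
      | test c =>
          cases h with
          | @test l c d t σ σ'' hc h =>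
            obtain ⟨w₁, w₂, σ₁, heq, hh, r₁, r₂⟩ := ih h
            have hhd : w₁.head = d := by
              have := congrArg DataPath.head heq; simpa [DataPath.comp] using this.symm
            refine ⟨w₁, w₂, σ₁, heq, hh, ?_, r₂⟩
            cases w₁
            simp only at hhd; subst hhd
            exact ItemRun.test hc r₁

lemma itemRun_toREM {l : List (Item A k)} {w : DataPath A D} {σ σ'}
    (h : ItemRun l w σ σ') : REMSat (toREM l) w σ σ' := by
  induction h with
  | nil d σ => exact REMSat.eps d σ
  | @letter l a d₁ d₂ t σ σ'' h ih =>
      have hcomp : (⟨d₁, (a, d₂) :: t⟩ : DataPath A D) =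
          DataPath.comp ⟨d₁, [(a, d₂)]⟩ ⟨d₂, t⟩ := rfl
      rw [show toREM (Item.letter a :: l) = REM.concat (.letter a) (toREM l) from rfl, hcomp]
      exact REMSat.concat (by simp [DataPath.lastVal]) (REMSat.letter a d₁ d₂ _) ih
  | @bind l rs d t σ σ'' h ih =>
      have hcomp : (⟨d, t⟩ : DataPath A D) =
          DataPath.comp ⟨d, []⟩ ⟨d, t⟩ := rfl
      rw [show toREM (Item.bind rs :: l) = REM.concat (.bind rs .eps) (toREM l) from rfl, hcomp]
      exact REMSat.concat (by simp) (REMSat.bind (REMSat.eps d _)) ih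
  | @test l c d t σ σ'' hc h ih =>
      have hcomp : (⟨d, t⟩ : DataPath A D) =
          DataPath.comp ⟨d, []⟩ ⟨d, t⟩ := rfl
      rw [show toREM (Item.test c :: l) = REM.concat (.test .eps c) (toREM l) from rfl, hcomp]
      exact REMSat.concat (by simp) (REMSat.test (REMSat.eps d _) (by simpa using hc)) ih

lemma toREM_itemRun {l : List (Item A k)} :
    ∀ {w : DataPath A D} {σ σ'}, REMSat (toREM l) w σ σ' → ItemRun l w σ σ' := by
  induction l with
  | nil =>
      intro w σ σ' h
      cases h
      exact ItemRun.nil _ _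
  | cons x l ih =>
      intro w σ σ' h
      cases x with
      | letter a =>
          cases h with
          | @concat e₁ e₂ w₁ w₂ σ σ₁ σ'' hh h₁ h₂ =>
            cases h₁
            next d₁ d₂ =>
            have hd : d₂ = w₂.head := by simpa [DataPath.lastVal] using hh
            have hstep : DataPath.comp ⟨d₁, [(a, d₂)]⟩ w₂ = ⟨d₁, (a, d₂) :: w₂.tail⟩ := rfl
            rw [hstep]
            apply ItemRun.letter
            have hw : (⟨d₂, w₂.tail⟩ : DataPath A D) = w₂ := by
              cases w₂; simp only at hd ⊢; rw [hd]
            rw [hw]; exact ih h₂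
      | bind rs =>
          cases h with
          | @concat e₁ e₂ w₁ w₂ σ σ₁ σ'' hh h₁ h₂ =>
            cases h₁ with
            | bind h₁ =>
              cases h₁
              next d =>
              have hd : d = w₂.head := by simpa [DataPath.lastVal] using hh
              have hstep : DataPath.comp ⟨d, []⟩ w₂ = ⟨d, w₂.tail⟩ := rfl
              rw [hstep]
              apply ItemRun.bind
              have hw : (⟨d, w₂.tail⟩ : DataPath A D) = w₂ := by
                cases w₂; simp only at hd ⊢; rw [hd]
              have h₂' : REMSat (toREM l) w₂ (updReg σ rs d) σ' := h₂
              rw [hw]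
              exact ih h₂'
      | test c =>
          cases h with
          | @concat e₁ e₂ w₁ w₂ σ σ₁ σ'' hh h₁ h₂ =>
            cases h₁ with
            | test h₁ hc =>
              cases h₁
              next d =>
              have hd : d = w₂.head := by simpa [DataPath.lastVal] using hh
              have hstep : DataPath.comp ⟨d, []⟩ w₂ = ⟨d, w₂.tail⟩ := rfl
              rw [hstep]
              apply ItemRun.test (by simpa using hc)
              have hw : (⟨d, w₂.tail⟩ : DataPath A D) = w₂ := by
                cases w₂; simp only at hd ⊢; rw [hd]
              rw [hw]
              exact ih h₂

/-- Linearization: every REM derivation factors through an item list whose runs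
all replay in the original REM. -/
lemma extract {e : REM A k} {w : DataPath A D} {σ σ'} (h : REMSat e w σ σ') :
    ∃ l : List (Item A k), ItemRun l w σ σ' ∧
      ∀ (w' : DataPath A D) (τ τ' : Fin k → Option D),
        ItemRun l w' τ τ' → REMSat e w' τ τ' := by
  induction h with
  | eps d σ =>
      refine ⟨[], ItemRun.nil d σ, ?_⟩
      intro w' τ τ' h'
      cases h'
      exact REMSat.eps _ _
  | letter a d₁ d₂ σ =>
      refine ⟨[.letter a], ItemRun.letter (ItemRun.nil d₂ σ), ?_⟩
      intro w' τ τ' h'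
      cases h' with
      | letter h' => cases h'; exact REMSat.letter _ _ _ _
  | plusL h ih =>
      obtain ⟨l, r, s⟩ := ih
      exact ⟨l, r, fun w' τ τ' h' => REMSat.plusL (s w' τ τ' h')⟩
  | plusR h ih =>
      obtain ⟨l, r, s⟩ := ih
      exact ⟨l, r, fun w' τ τ' h' => REMSat.plusR (s w' τ τ' h')⟩
  | concat hh h₁ h₂ ih₁ ih₂ =>
      obtain ⟨l₁, r₁, s₁⟩ := ih₁
      obtain ⟨l₂, r₂, s₂⟩ := ih₂
      refine ⟨l₁ ++ l₂, itemRun_append r₁ r₂ hh, ?_⟩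
      intro w' τ τ' h'
      obtain ⟨w₁, w₂, τ₁, rfl, hh', q₁, q₂⟩ := itemRun_split h'
      exact REMSat.concat hh' (s₁ _ _ _ q₁) (s₂ _ _ _ q₂)
  | iterBase h ih =>
      obtain ⟨l, r, s⟩ := ih
      exact ⟨l, r, fun w' τ τ' h' => REMSat.iterBase (s w' τ τ' h')⟩
  | iterStep hh h₁ h₂ ih₁ ih₂ =>
      obtain ⟨l₁, r₁, s₁⟩ := ih₁
      obtain ⟨l₂, r₂, s₂⟩ := ih₂
      refine ⟨l₁ ++ l₂, itemRun_append r₁ r₂ hh, ?_⟩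
      intro w' τ τ' h'
      obtain ⟨w₁, w₂, τ₁, rfl, hh', q₁, q₂⟩ := itemRun_split h'
      exact REMSat.iterStep hh' (s₁ _ _ _ q₁) (s₂ _ _ _ q₂)
  | @test e c w σ σ' h hc ih =>
      obtain ⟨l, r, s⟩ := ih
      refine ⟨l ++ [.test c], ?_, ?_⟩
      · have r₂ : ItemRun [Item.test c] (⟨w.lastVal, []⟩ : DataPath A D) σ' σ' :=
          ItemRun.test hc (ItemRun.nil _ _)
        have := itemRun_append r r₂ rfl
        simpa using this
      · intro w' τ τ' h'
        obtain ⟨w₁, w₂, τ₁, rfl, hh', q₁, q₂⟩ := itemRun_split h'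
        cases q₂ with
        | @test l' c' d t' σ'' τ'' hc' q₂ =>
          cases q₂
          simp only [comp_nil]
          have hd : w₁.lastVal = d := hh'
          exact REMSat.test (s _ _ _ q₁) (hd ▸ hc')
  | @bind rs e w σ σ' h ih =>
      obtain ⟨l, r, s⟩ := ih
      refine ⟨.bind rs :: l, ?_, ?_⟩
      · cases w with
        | mk hd tl => exact ItemRun.bind r
      · intro w' τ τ' h'
        cases h' with
        | bind h' =>
          exact REMSat.bind (s _ _ _ h')

/-- Translation of conditions along a register renaming determined by the
current `k`-assignment of the reference run. -/
def mapCond (g : D → Fin n) (σ : Fin k → Option D) : Cond k → Cond n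
  | .top => .top
  | .eq i => (match σ i with | none => .neg .top | some d => .eq (g d))
  | .ne i => (match σ i with | none => .top | some d => .ne (g d))
  | .conj c₁ c₂ => .conj (mapCond g σ c₁) (mapCond g σ c₂)
  | .disj c₁ c₂ => .disj (mapCond g σ c₁) (mapCond g σ c₂)
  | .neg c => .neg (mapCond g σ c)

/-- Pullback of an `n`-assignment to a `k`-assignment along `g` and the
reference `k`-assignment. -/
def Tmap (g : D → Fin n) (σk : Fin k → Option D) (σδ : Fin n → Option D) :
    Fin k → Option D :=
  fun i => (σk i).bind fun d => σδ (g d)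

lemma condSat_mapCond {g : D → Fin n} {σk : Fin k → Option D}
    {σδ : Fin n → Option D} {d : D} (c : Cond k) :
    CondSat d σδ (mapCond g σk c) ↔ CondSat d (Tmap g σk σδ) c := by
  induction c with
  | top => simp [mapCond, CondSat]
  | eq i =>
      cases h : σk i <;> simp [mapCond, CondSat, Tmap, h]
  | ne i =>
      cases h : σk i <;> simp [mapCond, CondSat, Tmap, h]
  | conj c₁ c₂ ih₁ ih₂ => simp [mapCond, CondSat, ih₁, ih₂]
  | disj c₁ c₂ ih₁ ih₂ => simp [mapCond, CondSat, ih₁, ih₂]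
  | neg c ih => simp [mapCond, CondSat, ih]

/-- The register collapse: a run over `k` registers whose data values lie in a
set `R` injected into `Fin δ` by `g` can be translated to `δ` registers. -/
lemma translate {g : D → Fin δ} {R : Set D} (hg : Set.InjOn g R)
    {l : List (Item A k)} {w : DataPath A D} {σk τk : Fin k → Option D}
    (hrun : ItemRun l w σk τk) :
    w.head ∈ R → (∀ p ∈ w.tail, p.2 ∈ R) →
    (∀ i d, σk i = some d → d ∈ R) →
    ∃ l' : List (Item A δ),
      (∀ σδ : Fin δ → Option D,
          (∀ d, (∃ i, σk i = some d) → σδ (g d) = some d) →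
          ∃ τδ, ItemRun l' w σδ τδ) ∧
      (∀ (w' : DataPath A D) (σδ τδ : Fin δ → Option D), ItemRun l' w' σδ τδ →
          ∃ τ, ItemRun l w' (Tmap g σk σδ) τ) := by
  induction hrun with
  | nil d σ =>
      intro _ _ _
      refine ⟨[], fun σδ _ => ⟨σδ, ItemRun.nil d σδ⟩, ?_⟩
      intro w' σδ τδ h'
      cases h'
      exact ⟨_, ItemRun.nil _ _⟩
  | @letter l a d₁ d₂ t σ σ' h ih =>
      intro hw₁ hw₂ hσ
      obtain ⟨l', hc, hs⟩ := ih (hw₂ (a, d₂) (by simp)) (fun p hp => hw₂ p (by simp [hp])) hσ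
      refine ⟨.letter a :: l', ?_, ?_⟩
      · intro σδ hinv
        obtain ⟨τδ, r⟩ := hc σδ hinv
        exact ⟨τδ, ItemRun.letter r⟩
      · intro w' σδ τδ h'
        cases h' with
        | letter h' =>
          obtain ⟨τ, r⟩ := hs _ _ _ h'
          exact ⟨τ, ItemRun.letter r⟩
  | @bind l rs d t σ σ' h ih =>
      intro hw₁ hw₂ hσ
      have hd : d ∈ R := hw₁
      have hσ' : ∀ i d₂, updReg σ rs d i = some d₂ → d₂ ∈ R := by
        intro i d₂ hi
        unfold updReg at hi
        by_cases hm : i ∈ rs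
        · rw [if_pos hm] at hi
          simp only [Option.some.injEq] at hi
          exact hi ▸ hd
        · rw [if_neg hm] at hi; exact hσ i d₂ hi
      obtain ⟨l', hc, hs⟩ := ih hw₁ hw₂ hσ'
      by_cases hb : ∃ i, σ i = some d
      · -- rebinding case: value `d` already stored
        refine ⟨.test (.eq (g d)) :: .bind [g d] :: l', ?_, ?_⟩
        · intro σδ hinv
          have hgd : σδ (g d) = some d := hinv d hb
          have hinv' : ∀ d₂, (∃ i, updReg σ rs d i = some d₂) →
              updReg σδ [g d] d (g d₂) = some d₂ := by
            rintro d₂ ⟨i, hi⟩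
            unfold updReg at hi ⊢
            by_cases hm : i ∈ rs
            · rw [if_pos hm] at hi
              simp only [Option.some.injEq] at hi
              subst hi; simp
            · rw [if_neg hm] at hi
              by_cases he : g d₂ = g d
              · have hdd : d₂ = d := hg (hσ i d₂ hi) hd he
                subst hdd; simp
              · rw [if_neg (by simpa using he)]
                exact hinv d₂ ⟨i, hi⟩
          obtain ⟨τδ, r⟩ := hc (updReg σδ [g d] d) hinv'
          exact ⟨τδ, ItemRun.test (show CondSat d σδ (.eq (g d)) from hgd)
            (ItemRun.bind r)⟩
        · intro w' σδ τδ h'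
          cases h' with
          | @test l'' c'' d' t' σδ₀ τδ₀ hc' h' =>
            cases h' with
            | bind h' =>
              have hteq : σδ (g d) = some d' := hc'
              obtain ⟨τ, r⟩ := hs _ _ _ h'
              have hT : Tmap g (updReg σ rs d) (updReg σδ [g d] d') =
                  updReg (Tmap g σ σδ) rs d' := by
                funext i
                simp only [Tmap, updReg]
                by_cases hm : i ∈ rs
                · simp [hm]
                · rw [if_neg hm, if_neg hm]
                  cases hi : σ i with
                  | none => rfl
                  | some d₂ =>
                    simp only [Option.bind_some]
                    by_cases he : g d₂ = g d
                    · have hdd : d₂ = d := hg (hσ i d₂ hi) hd he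
                      subst hdd
                      simp [hteq]
                    · rw [if_neg (by simpa using he)]
              rw [hT] at r
              exact ⟨τ, ItemRun.bind r⟩
      · -- fresh case
        refine ⟨.bind [g d] :: l', ?_, ?_⟩
        · intro σδ hinv
          have hinv' : ∀ d₂, (∃ i, updReg σ rs d i = some d₂) →
              updReg σδ [g d] d (g d₂) = some d₂ := by
            rintro d₂ ⟨i, hi⟩
            unfold updReg at hi ⊢
            by_cases hm : i ∈ rs
            · rw [if_pos hm] at hi
              simp only [Option.some.injEq] at hi
              subst hi; simp
            · rw [if_neg hm] at hi
              by_cases he : g d₂ = g d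
              · have hdd : d₂ = d := hg (hσ i d₂ hi) hd he
                exact absurd ⟨i, hdd ▸ hi⟩ hb
              · rw [if_neg (by simpa using he)]
                exact hinv d₂ ⟨i, hi⟩
          obtain ⟨τδ, r⟩ := hc (updReg σδ [g d] d) hinv'
          exact ⟨τδ, ItemRun.bind r⟩
        · intro w' σδ τδ h'
          cases h' with
          | bind h' =>
            obtain ⟨τ, r⟩ := hs _ _ _ h'
            rename_i d' t'
            have hT : Tmap g (updReg σ rs d) (updReg σδ [g d] d') =
                updReg (Tmap g σ σδ) rs d' := by
              funext i
              simp only [Tmap, updReg]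
              by_cases hm : i ∈ rs
              · simp [hm]
              · rw [if_neg hm, if_neg hm]
                cases hi : σ i with
                | none => rfl
                | some d₂ =>
                  simp only [Option.bind_some]
                  have he : ¬ g d₂ = g d := by
                    intro he
                    exact hb ⟨i, (hg (hσ i d₂ hi) hd he) ▸ hi⟩
                  rw [if_neg (by simpa using he)]
            rw [hT] at r
            exact ⟨τ, ItemRun.bind r⟩
  | @test l c d t σ σ' hcnd h ih =>
      intro hw₁ hw₂ hσ
      obtain ⟨l', hc, hs⟩ := ih hw₁ hw₂ hσ
      refine ⟨.test (mapCond g σ c) :: l', ?_, ?_⟩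
      · intro σδ hinv
        obtain ⟨τδ, r⟩ := hc σδ hinv
        have hTσ : Tmap g σ σδ = σ := by
          funext i
          simp only [Tmap]
          cases hi : σ i with
          | none => rfl
          | some d₂ => simpa using hinv d₂ ⟨i, hi⟩
        refine ⟨τδ, ItemRun.test ?_ r⟩
        rw [condSat_mapCond, hTσ]
        exact hcnd
      · intro w' σδ τδ h'
        cases h' with
        | test hc' h' =>
          obtain ⟨τ, r⟩ := hs _ _ _ h'
          exact ⟨τ, ItemRun.test ((condSat_mapCond c).mp hc') r⟩

/-- Sum of a list of REMs (empty sum is an REM with empty language). -/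
def plusList : List (REM A k) → REM A k
  | [] => .test .eps (.neg .top)
  | e :: l => .plus e (plusList l)

lemma remSat_plusList {L : List (REM A k)} {w : DataPath A D} {σ σ'} :
    REMSat (plusList L) w σ σ' ↔ ∃ e ∈ L, REMSat e w σ σ' := by
  induction L with
  | nil =>
      simp only [List.not_mem_nil, false_and, exists_false, iff_false]
      intro h
      cases h with
      | test h hc => exact hc trivial
  | cons e L ih =>
      constructor
      · intro h
        cases h with
        | plusL h => exact ⟨e, by simp, h⟩
        | plusR h =>
            obtain ⟨e', he', h⟩ := ih.mp h
            exact ⟨e', by simp [he'], h⟩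
      · rintro ⟨e', he', h⟩
        rcases List.mem_cons.mp he' with rfl | he'
        · exact REMSat.plusL h
        · exact REMSat.plusR (ih.mpr ⟨e', he', h⟩)

lemma connects_vals {V : Type} {G : DataGraph V A D} {u v : V} {w : DataPath A D}
    (h : Connects G u w v) :
    w.head ∈ Set.range G.ρ ∧ ∀ p ∈ w.tail, p.2 ∈ Set.range G.ρ := by
  induction h with
  | nil u => exact ⟨⟨u, rfl⟩, by simp⟩
  | @cons u v x a t hE hC ih =>
      refine ⟨⟨u, rfl⟩, ?_⟩
      intro p hp
      rcases List.mem_cons.mp hp with rfl | hp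
      · exact ⟨v, rfl⟩
      · exact ih.2 p hp

end RegCollapse

/-- a binary relation on a data graph with `δ` distinct data values
is definable by some REM iff it is definable by a `δ`-REM. -/
theorem rem_definable_iff_delta_registers {V A D : Type}
    [Fintype V] [Fintype A] [Countable D] [Infinite D]
    (G : DataGraph V A D) (S : Set (V × V)) (δ : ℕ)
    (hδ : (Set.range G.ρ).ncard = δ) :
    (∃ (k : ℕ) (e : REM A k),
        S = {p : V × V | ∃ w : DataPath A D, w ∈ REMLang e ∧ Connects G p.1 w p.2}) ↔
    (∃ e : REM A δ,
        S = {p : V × V | ∃ w : DataPath A D, w ∈ REMLang e ∧ Connects G p.1 w p.2}) := by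
  classical
  constructor
  · rintro ⟨k, e, rfl⟩
    rcases isEmpty_or_nonempty V with hV | hV
    · refine ⟨.eps, ?_⟩
      ext p
      exact (hV.false p.1).elim
    · -- the injection of the data values of `G` into `Fin δ`
      have hfin : (Set.range G.ρ).Finite := Set.finite_range _
      haveI : Finite ↥(Set.range G.ρ) := hfin.to_subtype
      have hcard : Nat.card ↥(Set.range G.ρ) = δ := by
        rw [Nat.card_coe_set_eq, hδ]
      obtain ⟨gE⟩ : Nonempty (↥(Set.range G.ρ) ≃ Fin δ) :=
        ⟨Finite.equivFinOfCardEq hcard⟩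
      haveI : Nonempty (Fin δ) :=
        ⟨gE ⟨G.ρ (Classical.arbitrary V), ⟨_, rfl⟩⟩⟩
      obtain ⟨g, hg⟩ : ∃ g : D → Fin δ, Set.InjOn g (Set.range G.ρ) := by
        refine ⟨fun d => if h : d ∈ Set.range G.ρ then gE ⟨d, h⟩
          else Classical.arbitrary _, ?_⟩
        intro x hx y hy hxy
        have hxy2 : (if h : x ∈ Set.range G.ρ then gE ⟨x, h⟩ else Classical.arbitrary _)
            = (if h : y ∈ Set.range G.ρ then gE ⟨y, h⟩ else Classical.arbitrary _) := hxy
        rw [dif_pos hx, dif_pos hy] at hxy2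
        exact congrArg Subtype.val (gE.injective hxy2)
      -- one δ-REM per pair of S
      have key : ∀ p : V × V, ∃ E : REM A δ,
          p ∈ {q : V × V | ∃ w : DataPath A D, w ∈ REMLang e ∧ Connects G q.1 w q.2} →
          ((∃ w : DataPath A D, w ∈ REMLang E ∧ Connects G p.1 w p.2) ∧
           (∀ (q : V × V) (w : DataPath A D), w ∈ REMLang (D := D) E →
              Connects G q.1 w q.2 →
              q ∈ {q : V × V | ∃ w : DataPath A D, w ∈ REMLang e ∧ Connects G q.1 w q.2})) := by
        intro p
        by_cases hp : p ∈ {q : V × V | ∃ w : DataPath A D, w ∈ REMLang e ∧ Connects G q.1 w q.2}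
        · obtain ⟨w, ⟨σ', hsat⟩, hconn⟩ := hp
          obtain ⟨l, hrun, hsound⟩ := RegCollapse.extract hsat
          have hvals := RegCollapse.connects_vals hconn
          obtain ⟨l', hcomp, hsnd⟩ := RegCollapse.translate hg hrun hvals.1 hvals.2
            (by intro i d hid; exact absurd hid (by simp))
          refine ⟨RegCollapse.toREM l', fun _ => ⟨⟨w, ?_, hconn⟩, ?_⟩⟩
          · obtain ⟨τδ, hr⟩ := hcomp (fun _ => none)
              (by rintro d ⟨i, hi⟩; exact absurd hi (by simp))
            exact ⟨τδ, RegCollapse.itemRun_toREM hr⟩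
          · rintro q w' ⟨τδ, hsat'⟩ hconn'
            obtain ⟨τ, hrun'⟩ := hsnd w' _ _ (RegCollapse.toREM_itemRun hsat')
            have hT : RegCollapse.Tmap g (fun _ : Fin k => (none : Option D))
                (fun _ : Fin δ => (none : Option D)) = (fun _ : Fin k => none) := rfl
            rw [hT] at hrun'
            exact ⟨w', ⟨τ, hsound w' _ _ hrun'⟩, hconn'⟩
        · exact ⟨.eps, fun h => absurd h hp⟩
      choose E hE using key
      set Sset := {q : V × V | ∃ w : DataPath A D, w ∈ REMLang e ∧ Connects G q.1 w q.2}
        with hSset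
      refine ⟨RegCollapse.plusList ((Set.toFinite Sset).toFinset.toList.map E), ?_⟩
      ext q
      constructor
      · intro hq
        obtain ⟨⟨w, ⟨τ, hsat⟩, hconn⟩, _⟩ := hE q hq
        refine ⟨w, ⟨τ, RegCollapse.remSat_plusList.mpr ⟨E q, ?_, hsat⟩⟩, hconn⟩
        exact List.mem_map.mpr ⟨q, by
          rw [Finset.mem_toList, Set.Finite.mem_toFinset]; exact hq, rfl⟩
      · rintro ⟨w, ⟨τ, hsat⟩, hconn⟩
        obtain ⟨E', hmem, hsatE⟩ := RegCollapse.remSat_plusList.mp hsat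
        obtain ⟨p, hpmem, rfl⟩ := List.mem_map.mp hmem
        have hpS : p ∈ Sset := by
          rwa [Finset.mem_toList, Set.Finite.mem_toFinset] at hpmem
        exact (hE p hpS).2 q w ⟨τ, hsatE⟩ hconn
  · rintro ⟨e, h⟩
    exact ⟨δ, e, h⟩
end
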